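/- Fix k ≥ 2. The map sending a planar tree τ with k labeled leaves to the pair (|w|, (S_1(τ), ..., S_{|π|}(τ))), where w is the most recent common ancestor of all k leaves, π = π(τ) is the partition of {1,...,k} grouping leaf indices that remain connected after removing w, and S_i(τ) is the i-th subtree attached at w, is a bijection from the set of planar trees with k leaves onto the disjoint union over all partitions π of {1,...,k} into consecutive-integer blocks with |π| ≥ 2, of ℕ × (T_{|π_1|} × ... × T_{|π_{|π|}|}), where T_j denotes the set of planar trees with j leaves. -/

import Mathlib

open scoped Classical

noncomputable section

/-- A (finite) rooted planar tree, encoded as a prefix-closed finite set of words over ℕ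
containing the root `[]`, with children of each vertex indexed consecutively. -/
def IsPlanarTree (τ : Finset (List ℕ)) : Prop :=
  [] ∈ τ ∧ (∀ v w : List ℕ, v <+: w → w ∈ τ → v ∈ τ) ∧
    ∀ v : List ℕ, ∃ d : ℕ, ∀ i : ℕ, v ++ [i] ∈ τ ↔ i < d

/-- The leaves of a set of words: its maximal elements for the prefix order. -/
def leavesOf (s : Finset (List ℕ)) : Finset (List ℕ) :=
  s.filter fun v => ∀ w ∈ s, v <+: w → w = v

/-- Longest common prefix of two words. -/
def commonPrefix : List ℕ → List ℕ → List ℕ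
  | a :: v, b :: w => if a = b then a :: commonPrefix v w else []
  | _, _ => []

/-- Longest common prefix of a list of words. -/
def listMRCA : List (List ℕ) → List ℕ
  | [] => []
  | x :: xs => xs.foldl commonPrefix x

/-- The most recent common ancestor of all the leaves of a tree (its first branch point
when the tree has at least two leaves). -/
def treeMRCA (τ : Finset (List ℕ)) : List ℕ :=
  listMRCA ((leavesOf τ).sort (· ≤ ·))

/-- The subtree of `τ` rooted at the vertex `u`, relabeled so that `u` becomes the root. -/
def subtreeAt (τ : Finset (List ℕ)) (u : List ℕ) : Finset (List ℕ) :=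
  (τ.filter fun v => u <+: v).image fun v => v.drop u.length

/-- Planar trees with `j` (labeled) leaves. -/
def PTree (j : ℕ) := {τ : Finset (List ℕ) // IsPlanarTree τ ∧ (leavesOf τ).card = j}

/-- Partitions of `{1, …, k}` into blocks of consecutive integers with at least two blocks,
encoded as compositions of `k` of length `≥ 2`. -/
def ConsecComposition (k : ℕ) :=
  {c : List ℕ // (∀ x ∈ c, 0 < x) ∧ c.sum = k ∧ 2 ≤ c.length}

/-!
Let `w` be the most recent common ancestor of the leaves of a planar tree `τ` with at least two
leaves. Every ancestor `u ++ [a]` of `w` has `a = 0`: the vertex `u ++ [0]` exists, and a leaf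
descending from it also descends from `w`, which puts `u ++ [0]` on the path from the root to
`w`. Hence `w = 0^|w|`, and `τ` is recovered from `|w|` by grafting the subtrees `S_i` rooted at
the children `w ++ [i]`, `i < d`, onto the path `0^|w|`. Conversely, grafting `d ≥ 2` trees,
each with a leaf, onto the end of the path `0^n` gives a tree whose MRCA is that end. The leaf
counts of the `S_i` are positive and sum to `k`, and `d ≥ 2` since otherwise `w ++ [0]` would
be a common ancestor of all leaves.
-/

open Finset

theorem prefix_commonPrefix_iff {p : List ℕ} :
    ∀ {a b : List ℕ}, p <+: commonPrefix a b ↔ p <+: a ∧ p <+: b := by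
  induction p with
  | nil => simp
  | cons c p ih =>
    intro a b
    match a, b with
    | [], _ => simp [commonPrefix]
    | _ :: _, [] => simp [commonPrefix]
    | x :: v, y :: w =>
      unfold commonPrefix
      split_ifs with hxy
      · simp [ih, hxy, and_and_and_comm]
      · simp only [List.prefix_nil, reduceCtorEq, false_iff, List.cons_prefix_cons, not_and]
        rintro ⟨rfl, -⟩ rfl -
        exact hxy rfl

theorem prefix_foldl_commonPrefix_iff {p : List ℕ} (l : List (List ℕ)) (a : List ℕ) :
    p <+: l.foldl commonPrefix a ↔ p <+: a ∧ ∀ y ∈ l, p <+: y := by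
  induction l generalizing a with
  | nil => simp
  | cons x xs ih => simp [ih, prefix_commonPrefix_iff, and_assoc]

theorem prefix_listMRCA_iff {p : List ℕ} :
    ∀ {l : List (List ℕ)}, l ≠ [] → (p <+: listMRCA l ↔ ∀ y ∈ l, p <+: y)
  | x :: xs, _ => by simp [listMRCA, prefix_foldl_commonPrefix_iff]

theorem mem_leavesOf {s : Finset (List ℕ)} {v : List ℕ} :
    v ∈ leavesOf s ↔ v ∈ s ∧ ∀ w ∈ s, v <+: w → w = v :=
  mem_filter

theorem leavesOf_subset (s : Finset (List ℕ)) : leavesOf s ⊆ s :=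
  filter_subset _ _

theorem exists_mem_leavesOf_prefix {s : Finset (List ℕ)} {v : List ℕ} (hv : v ∈ s) :
    ∃ l ∈ leavesOf s, v <+: l := by
  have hv' : v ∈ s.filter (v <+: ·) := mem_filter.2 ⟨hv, List.prefix_rfl⟩
  obtain ⟨l, hl, hmax⟩ := (s.filter (v <+: ·)).exists_max_image List.length ⟨v, hv'⟩
  rw [mem_filter] at hl
  refine ⟨l, mem_leavesOf.2 ⟨hl.1, fun z hz hlz => ?_⟩, hl.2⟩
  exact (hlz.eq_of_length_le (hmax z (mem_filter.2 ⟨hz, hl.2.trans hlz⟩))).symm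

section MRCA

variable {τ : Finset (List ℕ)}

theorem prefix_treeMRCA_iff (hτ : (leavesOf τ).Nonempty) {p : List ℕ} :
    p <+: treeMRCA τ ↔ ∀ l ∈ leavesOf τ, p <+: l := by
  rw [treeMRCA, prefix_listMRCA_iff]
  · simp
  · simpa [← List.length_pos_iff, Finset.card_pos] using hτ

theorem treeMRCA_prefix_of_mem_leavesOf {l : List ℕ} (hl : l ∈ leavesOf τ) :
    treeMRCA τ <+: l :=
  (prefix_treeMRCA_iff ⟨l, hl⟩).1 (List.prefix_refl _) l hl

theorem treeMRCA_eq_of_forall_prefix {w x y : List ℕ} {a b : ℕ} (hab : a ≠ b)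
    (hw : ∀ l ∈ leavesOf τ, w <+: l) (ha : w ++ a :: x ∈ leavesOf τ)
    (hb : w ++ b :: y ∈ leavesOf τ) : treeMRCA τ = w := by
  obtain ⟨t, ht⟩ := (prefix_treeMRCA_iff ⟨_, ha⟩).2 hw
  have hta := treeMRCA_prefix_of_mem_leavesOf ha
  have htb := treeMRCA_prefix_of_mem_leavesOf hb
  rw [← ht, List.prefix_append_right_inj] at hta htb
  rcases t with _ | ⟨c, t⟩
  · simpa using ht.symm
  · rw [List.cons_prefix_cons] at hta htb
    exact absurd (hta.1.symm.trans htb.1) hab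

theorem exists_eq_treeMRCA_append_cons (hτ : 2 ≤ #(leavesOf τ)) {l : List ℕ}
    (hl : l ∈ leavesOf τ) : ∃ a r, l = treeMRCA τ ++ a :: r := by
  obtain ⟨t, ht⟩ := treeMRCA_prefix_of_mem_leavesOf hl
  rcases t with _ | ⟨a, r⟩
  · have hmax : ∀ l' ∈ leavesOf τ, l' = l := fun l' hl' =>
      (mem_leavesOf.1 hl).2 l' (leavesOf_subset τ hl')
        (by simpa [← ht] using treeMRCA_prefix_of_mem_leavesOf hl')
    have := Finset.card_le_one.2 fun a ha b hb => (hmax a ha).trans (hmax b hb).symm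
    omega
  · exact ⟨a, r, ht.symm⟩

theorem prefix_treeMRCA_or_exists_eq_append_cons {v : List ℕ} (hv : v ∈ τ) :
    v <+: treeMRCA τ ∨ ∃ i r, v = treeMRCA τ ++ i :: r := by
  obtain ⟨l, hl, hvl⟩ := exists_mem_leavesOf_prefix hv
  rcases List.prefix_or_prefix_of_prefix hvl (treeMRCA_prefix_of_mem_leavesOf hl) with
    hvw | ⟨_ | ⟨i, r⟩, hr⟩
  · exact Or.inl hvw
  · exact Or.inl (by simp [← hr])
  · exact Or.inr ⟨i, r, hr.symm⟩

end MRCA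

section PlanarTree

variable {τ : Finset (List ℕ)}

theorem IsPlanarTree.mem_of_prefix (h : IsPlanarTree τ) {v w : List ℕ} (hvw : v <+: w)
    (hw : w ∈ τ) : v ∈ τ :=
  h.2.1 v w hvw hw

def IsPlanarTree.numChildren (h : IsPlanarTree τ) (v : List ℕ) : ℕ :=
  (h.2.2 v).choose

theorem IsPlanarTree.append_singleton_mem_iff (h : IsPlanarTree τ) (v : List ℕ) (i : ℕ) :
    v ++ [i] ∈ τ ↔ i < h.numChildren v :=
  (h.2.2 v).choose_spec i

theorem IsPlanarTree.numChildren_eq (h : IsPlanarTree τ) {v : List ℕ} {d : ℕ}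
    (hd : ∀ i, v ++ [i] ∈ τ ↔ i < d) : h.numChildren v = d :=
  le_antisymm (le_of_forall_lt fun i hi => (hd i).1 ((h.append_singleton_mem_iff v i).2 hi))
    (le_of_forall_lt fun i hi => (h.append_singleton_mem_iff v i).1 ((hd i).2 hi))

theorem mem_subtreeAt {u x : List ℕ} : x ∈ subtreeAt τ u ↔ u ++ x ∈ τ := by
  simp only [subtreeAt, mem_image, mem_filter]
  constructor
  · rintro ⟨_, ⟨hz, t, rfl⟩, rfl⟩
    simpa using hz
  · exact fun h => ⟨u ++ x, ⟨h, List.prefix_append u x⟩, by simp⟩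

theorem mem_leavesOf_subtreeAt {u x : List ℕ} :
    x ∈ leavesOf (subtreeAt τ u) ↔ u ++ x ∈ leavesOf τ := by
  simp only [mem_leavesOf, mem_subtreeAt]
  refine and_congr_right fun _ => ⟨fun hmax z hz ⟨t, ht⟩ => ?_, fun hmax y hy hxy => ?_⟩
  · subst ht
    rw [List.append_assoc, hmax (x ++ t) (by simpa using hz) (List.prefix_append x t)]
  · exact List.append_cancel_left (hmax (u ++ y) hy ((List.prefix_append_right_inj u).2 hxy))

theorem leavesOf_subtreeAt_nonempty {u : List ℕ} (hu : u ∈ τ) :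
    (leavesOf (subtreeAt τ u)).Nonempty := by
  obtain ⟨_, hl, t, rfl⟩ := exists_mem_leavesOf_prefix hu
  exact ⟨t, mem_leavesOf_subtreeAt.2 hl⟩

theorem isPlanarTree_subtreeAt (h : IsPlanarTree τ) {u : List ℕ} (hu : u ∈ τ) :
    IsPlanarTree (subtreeAt τ u) := by
  refine ⟨by simpa [mem_subtreeAt], fun v w hvw hw => ?_, fun v => ?_⟩
  · rw [mem_subtreeAt] at hw ⊢
    exact h.mem_of_prefix ((List.prefix_append_right_inj u).2 hvw) hw
  · exact ⟨h.numChildren (u ++ v), fun i => by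
      rw [mem_subtreeAt, ← List.append_assoc, h.append_singleton_mem_iff]⟩

theorem IsPlanarTree.treeMRCA_mem (h : IsPlanarTree τ) (hτ : (leavesOf τ).Nonempty) :
    treeMRCA τ ∈ τ :=
  h.mem_of_prefix (treeMRCA_prefix_of_mem_leavesOf hτ.choose_spec)
    (leavesOf_subset τ hτ.choose_spec)

theorem IsPlanarTree.eq_zero_of_append_prefix_treeMRCA (h : IsPlanarTree τ)
    (hτ : (leavesOf τ).Nonempty) {u : List ℕ} {a : ℕ} (hua : u ++ [a] <+: treeMRCA τ) :
    a = 0 := by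
  have ha := (h.append_singleton_mem_iff u a).1 (h.mem_of_prefix hua (h.treeMRCA_mem hτ))
  have h0 : u ++ [0] ∈ τ := (h.append_singleton_mem_iff u 0).2 (Nat.zero_lt_of_lt ha)
  obtain ⟨l, hl, h0l⟩ := exists_mem_leavesOf_prefix h0
  have h0w : u ++ [0] <+: treeMRCA τ :=
    List.prefix_of_prefix_length_le h0l (treeMRCA_prefix_of_mem_leavesOf hl)
      (by simpa using hua.length_le)
  simpa [eq_comm] using List.prefix_of_prefix_length_le h0w hua (by simp)

theorem IsPlanarTree.treeMRCA_eq_replicate (h : IsPlanarTree τ) (hτ : (leavesOf τ).Nonempty) :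
    treeMRCA τ = List.replicate (treeMRCA τ).length 0 :=
  List.eq_replicate_iff.2 ⟨rfl, fun b hb => by
    obtain ⟨s, t, hst⟩ := List.append_of_mem hb
    exact h.eq_zero_of_append_prefix_treeMRCA hτ (u := s) ⟨t, by simp [hst]⟩⟩

theorem IsPlanarTree.two_le_numChildren_treeMRCA (h : IsPlanarTree τ)
    (hτ : 2 ≤ #(leavesOf τ)) : 2 ≤ h.numChildren (treeMRCA τ) := by
  by_contra hlt
  have hw0 : ∀ l ∈ leavesOf τ, treeMRCA τ ++ [0] <+: l := by
    intro l hl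
    obtain ⟨a, r, rfl⟩ := exists_eq_treeMRCA_append_cons hτ hl
    have ha := (h.append_singleton_mem_iff (treeMRCA τ) a).1
      (h.mem_of_prefix ⟨r, by simp⟩ (leavesOf_subset τ hl))
    obtain rfl : a = 0 := by omega
    exact ⟨r, by simp⟩
  simpa using ((prefix_treeMRCA_iff (card_pos.1 (by omega))).2 hw0).length_le

end PlanarTree

section Graft

variable {n d : ℕ} {S : ℕ → Finset (List ℕ)}

/-- The path `0^n` whose end carries the `d` children `0^n ++ [i]`, with the tree `S i`
grafted at `0^n ++ [i]`. -/
def graft (n d : ℕ) (S : ℕ → Finset (List ℕ)) : Finset (List ℕ) :=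
  (range (n + 1)).image (List.replicate · 0) ∪
    (range d).biUnion fun i => (S i).image (List.replicate n 0 ++ i :: ·)

theorem mem_graft {v : List ℕ} :
    v ∈ graft n d S ↔
      v <+: List.replicate n 0 ∨ ∃ i < d, ∃ x ∈ S i, v = List.replicate n 0 ++ i :: x := by
  simp only [graft, mem_union, mem_image, mem_range, mem_biUnion, List.prefix_replicate_iff]
  refine or_congr ⟨?_, fun ⟨hv, hrep⟩ => ⟨v.length, by omega, hrep.symm⟩⟩ ?_
  · rintro ⟨j, hj, rfl⟩
    exact ⟨by simp; omega, by simp⟩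
  · simp only [eq_comm]

theorem graft_congr {S' : ℕ → Finset (List ℕ)} (h : ∀ i < d, S i = S' i) :
    graft n d S = graft n d S' := by
  unfold graft
  congr 1
  exact biUnion_congr rfl fun i hi => by rw [h i (mem_range.1 hi)]

theorem append_cons_mem_graft {i : ℕ} {x : List ℕ} :
    List.replicate n 0 ++ i :: x ∈ graft n d S ↔ i < d ∧ x ∈ S i := by
  rw [mem_graft]
  constructor
  · rintro (hp | ⟨j, hj, y, hy, hxy⟩)
    · simpa using hp.length_le
    · simp only [List.append_cancel_left_eq, List.cons.injEq] at hxy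
      exact hxy.1 ▸ hxy.2 ▸ ⟨hj, hy⟩
  · exact fun ⟨hi, hx⟩ => Or.inr ⟨i, hi, x, hx, rfl⟩

theorem subtreeAt_graft {i : ℕ} (hi : i < d) :
    subtreeAt (graft n d S) (List.replicate n 0 ++ [i]) = S i := by
  ext x
  simp [mem_subtreeAt, append_cons_mem_graft, hi]

theorem replicate_append_singleton_mem_graft {m i : ℕ} (hm : m < n) :
    List.replicate m 0 ++ [i] ∈ graft n d S ↔ i < 1 := by
  rw [mem_graft]
  constructor
  · rintro (hp | ⟨j, -, y, -, hy⟩)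
    · exact Nat.lt_one_iff.2 (List.eq_of_mem_replicate (hp.sublist.subset (by simp)))
    · have := congrArg List.length hy
      simp at this
      omega
  · intro hi
    obtain rfl : i = 0 := by omega
    exact Or.inl (List.prefix_replicate_iff.2 ⟨by simpa, by simp [← List.replicate_succ']⟩)

variable (hS : ∀ i < d, IsPlanarTree (S i))
include hS

theorem graft_mem_of_prefix {v z : List ℕ} (hvz : v <+: z) (hz : z ∈ graft n d S) :
    v ∈ graft n d S := by
  rcases mem_graft.1 hz with hz | ⟨i, hi, x, hx, rfl⟩
  · exact mem_graft.2 (Or.inl (hvz.trans hz))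
  · rcases List.prefix_or_prefix_of_prefix hvz (List.prefix_append _ (i :: x)) with
      hv | ⟨t, rfl⟩
    · exact mem_graft.2 (Or.inl hv)
    · rcases List.prefix_cons_iff.1 ((List.prefix_append_right_inj _).1 hvz) with
        rfl | ⟨y, rfl, hyx⟩
      · exact mem_graft.2 (Or.inl (by simp))
      · exact append_cons_mem_graft.2 ⟨hi, (hS i hi).mem_of_prefix hyx hx⟩

theorem replicate_append_singleton_mem_graft_end {i : ℕ} :
    List.replicate n 0 ++ [i] ∈ graft n d S ↔ i < d := by
  rw [append_cons_mem_graft]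
  exact ⟨And.left, fun hi => ⟨hi, (hS i hi).1⟩⟩

theorem isPlanarTree_graft : IsPlanarTree (graft n d S) := by
  refine ⟨mem_graft.2 (Or.inl List.nil_prefix), fun v z => graft_mem_of_prefix hS, fun v => ?_⟩
  by_cases hv : v ∈ graft n d S
  · rcases mem_graft.1 hv with hp | ⟨i, hi, x, -, rfl⟩
    · obtain ⟨hlen, hrep⟩ := List.prefix_replicate_iff.1 hp
      rw [hrep]
      rcases hlen.lt_or_eq with hlt | rfl
      · exact ⟨1, fun j => replicate_append_singleton_mem_graft hlt⟩
      · exact ⟨d, fun j => replicate_append_singleton_mem_graft_end hS⟩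
    · refine ⟨(hS i hi).numChildren x, fun j => ?_⟩
      rw [List.append_assoc, List.cons_append, append_cons_mem_graft,
        ← (hS i hi).append_singleton_mem_iff]
      exact and_iff_right hi
  · exact ⟨0, fun j => iff_of_false
      (fun hj => hv (graft_mem_of_prefix hS (List.prefix_append v [j]) hj)) (Nat.not_lt_zero j)⟩

theorem mem_leavesOf_graft (hd : 0 < d) {l : List ℕ} :
    l ∈ leavesOf (graft n d S) ↔
      ∃ i < d, ∃ x ∈ leavesOf (S i), l = List.replicate n 0 ++ i :: x := by
  constructor
  · intro hl
    rcases mem_graft.1 (leavesOf_subset _ hl) with hp | ⟨i, hi, x, -, rfl⟩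
    · have h0 := (replicate_append_singleton_mem_graft_end hS (n := n)).2 hd
      have := (mem_leavesOf.1 hl).2 _ h0 (hp.trans (List.prefix_append _ [0]))
      have hlen := congrArg List.length this
      have := hp.length_le
      simp at hlen this
      omega
    · refine ⟨i, hi, x, ?_, rfl⟩
      rw [← subtreeAt_graft (S := S) (n := n) hi, mem_leavesOf_subtreeAt]
      simpa using hl
  · rintro ⟨i, hi, x, hx, rfl⟩
    rw [← subtreeAt_graft (S := S) (n := n) hi, mem_leavesOf_subtreeAt] at hx
    simpa using hx

theorem card_leavesOf_graft (hd : 0 < d) :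
    #(leavesOf (graft n d S)) = ∑ i ∈ range d, #(leavesOf (S i)) := by
  have hleaves : leavesOf (graft n d S) =
      (range d).biUnion fun i => (leavesOf (S i)).image (List.replicate n 0 ++ i :: ·) := by
    ext l
    simp [mem_leavesOf_graft hS hd, eq_comm]
  rw [hleaves, card_biUnion]
  · exact sum_congr rfl fun i _ => card_image_of_injective _ fun x y hxy => by simpa using hxy
  · intro i _ j _ hij
    simp only [Finset.disjoint_left, mem_image]
    rintro _ ⟨x, -, rfl⟩ ⟨y, -, hyx⟩
    simp only [List.append_cancel_left_eq, List.cons.injEq] at hyx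
    exact hij hyx.1.symm

theorem treeMRCA_graft (hd : 2 ≤ d) (hne : ∀ i < d, (leavesOf (S i)).Nonempty) :
    treeMRCA (graft n d S) = List.replicate n 0 := by
  obtain ⟨x, hx⟩ := hne 0 (by omega)
  obtain ⟨y, hy⟩ := hne 1 (by omega)
  refine treeMRCA_eq_of_forall_prefix zero_ne_one ?_
    ((mem_leavesOf_graft hS (by omega)).2 ⟨0, by omega, x, hx, rfl⟩)
    ((mem_leavesOf_graft hS (by omega)).2 ⟨1, by omega, y, hy, rfl⟩)
  intro l hl
  obtain ⟨i, -, x, -, rfl⟩ := (mem_leavesOf_graft hS (by omega)).1 hl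
  exact List.prefix_append _ _

end Graft

section Decomposition

variable {τ : Finset (List ℕ)}

theorem IsPlanarTree.graft_subtreeAt_treeMRCA (h : IsPlanarTree τ)
    (hτ : (leavesOf τ).Nonempty) :
    graft (treeMRCA τ).length (h.numChildren (treeMRCA τ))
      (fun i => subtreeAt τ (treeMRCA τ ++ [i])) = τ := by
  ext v
  rw [mem_graft, ← h.treeMRCA_eq_replicate hτ]
  constructor
  · rintro (hv | ⟨i, -, x, hx, rfl⟩)
    · exact h.mem_of_prefix hv (h.treeMRCA_mem hτ)
    · simpa [mem_subtreeAt] using hx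
  · intro hv
    refine (prefix_treeMRCA_or_exists_eq_append_cons hv).imp id ?_
    rintro ⟨i, x, rfl⟩
    have hi := (h.append_singleton_mem_iff (treeMRCA τ) i).1 (h.mem_of_prefix ⟨x, by simp⟩ hv)
    exact ⟨i, hi, x, by simpa [mem_subtreeAt] using hv, rfl⟩

theorem IsPlanarTree.card_leavesOf_eq_sum (h : IsPlanarTree τ) (hτ : 2 ≤ #(leavesOf τ)) :
    #(leavesOf τ) = ∑ i ∈ range (h.numChildren (treeMRCA τ)),
      #(leavesOf (subtreeAt τ (treeMRCA τ ++ [i]))) := by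
  have hchild (i) (hi : i < h.numChildren (treeMRCA τ)) : treeMRCA τ ++ [i] ∈ τ :=
    (h.append_singleton_mem_iff _ i).2 hi
  conv_lhs => rw [← h.graft_subtreeAt_treeMRCA (card_pos.1 (by omega))]
  exact card_leavesOf_graft (fun i hi => isPlanarTree_subtreeAt h (hchild i hi))
    (by have := h.two_le_numChildren_treeMRCA hτ; omega)

def IsPlanarTree.branchComposition (h : IsPlanarTree τ) : List ℕ :=
  List.ofFn fun i : Fin (h.numChildren (treeMRCA τ)) =>
    #(leavesOf (subtreeAt τ (treeMRCA τ ++ [i.1])))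

theorem IsPlanarTree.length_branchComposition (h : IsPlanarTree τ) :
    h.branchComposition.length = h.numChildren (treeMRCA τ) :=
  List.length_ofFn

theorem IsPlanarTree.branchComposition_isConsecComposition (h : IsPlanarTree τ)
    (hτ : 2 ≤ #(leavesOf τ)) :
    (∀ c ∈ h.branchComposition, 0 < c) ∧ h.branchComposition.sum = #(leavesOf τ) ∧
      2 ≤ h.branchComposition.length := by
  refine ⟨fun c hc => ?_, ?_, h.length_branchComposition ▸ h.two_le_numChildren_treeMRCA hτ⟩
  · obtain ⟨i, rfl⟩ := List.mem_ofFn.1 hc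
    exact card_pos.2 (leavesOf_subtreeAt_nonempty ((h.append_singleton_mem_iff _ i).2 i.2))
  · rw [IsPlanarTree.branchComposition, Fin.sum_ofFn, h.card_leavesOf_eq_sum hτ]
    exact (Finset.sum_range fun i => #(leavesOf (subtreeAt τ (treeMRCA τ ++ [i])))).symm

end Decomposition

abbrev BranchData (k : ℕ) :=
  Σ c : ConsecComposition k, ℕ × (∀ i : Fin c.1.length, PTree (c.1.get i))

namespace BranchData

variable {k : ℕ}

theorem ext {x y : BranchData k} (hc : x.1.1 = y.1.1) (hn : x.2.1 = y.2.1)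
    (hS : ∀ i (hx : i < x.1.1.length) (hy : i < y.1.1.length),
      (x.2.2 ⟨i, hx⟩).1 = (y.2.2 ⟨i, hy⟩).1) : x = y := by
  obtain ⟨⟨c, _⟩, n, S⟩ := x
  obtain ⟨⟨c', _⟩, n', S'⟩ := y
  obtain rfl : c = c' := hc
  obtain rfl : n = n' := hn
  congr
  exact funext fun i => Subtype.ext (hS i i.2 i.2)

def subtree (x : BranchData k) (i : ℕ) : Finset (List ℕ) :=
  if hi : i < x.1.1.length then (x.2.2 ⟨i, hi⟩).1 else ∅

theorem isPlanarTree_subtree (x : BranchData k) {i : ℕ} (hi : i < x.1.1.length) :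
    IsPlanarTree (x.subtree i) := by
  rw [subtree, dif_pos hi]
  exact (x.2.2 _).2.1

theorem card_leavesOf_subtree (x : BranchData k) {i : ℕ} (hi : i < x.1.1.length) :
    #(leavesOf (x.subtree i)) = x.1.1[i] := by
  rw [subtree, dif_pos hi]
  exact (x.2.2 _).2.2

theorem card_leavesOf_graft_subtree (x : BranchData k) :
    #(leavesOf (graft x.2.1 x.1.1.length x.subtree)) = k := by
  rw [card_leavesOf_graft (fun i hi => x.isPlanarTree_subtree hi) (by have := x.1.2.2.2; omega),
    Finset.sum_range]
  exact (sum_congr rfl fun i _ => x.card_leavesOf_subtree i.2).trans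
    ((Fin.sum_univ_getElem _).trans x.1.2.2.1)

def toPTree (x : BranchData k) : PTree k :=
  ⟨graft x.2.1 x.1.1.length x.subtree,
    isPlanarTree_graft fun _ hi => x.isPlanarTree_subtree hi, x.card_leavesOf_graft_subtree⟩

end BranchData

def PTree.toBranchData {k : ℕ} (hk : 2 ≤ k) (τ : PTree k) : BranchData k :=
  ⟨⟨τ.2.1.branchComposition, by
      obtain ⟨hpos, hsum, hlen⟩ := τ.2.1.branchComposition_isConsecComposition (by rw [τ.2.2]; exact hk)
      exact ⟨hpos, hsum.trans τ.2.2, hlen⟩⟩,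
    (treeMRCA τ.1).length,
    fun i => ⟨subtreeAt τ.1 (treeMRCA τ.1 ++ [i.1]),
      isPlanarTree_subtreeAt τ.2.1 ((τ.2.1.append_singleton_mem_iff _ _).2
        (i.2.trans_eq τ.2.1.length_branchComposition)),
      (List.get_ofFn _ i).symm⟩⟩

theorem PTree.toPTree_toBranchData {k : ℕ} (hk : 2 ≤ k) (τ : PTree k) :
    (τ.toBranchData hk).toPTree = τ := by
  refine Subtype.ext ?_
  refine (graft_congr (S' := fun i => subtreeAt τ.1 (treeMRCA τ.1 ++ [i]))
    fun i hi => dif_pos hi).trans ?_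
  change graft _ τ.2.1.branchComposition.length _ = τ.1
  rw [τ.2.1.length_branchComposition]
  exact τ.2.1.graft_subtreeAt_treeMRCA (card_pos.1 (by have := τ.2.2; omega))

theorem BranchData.toBranchData_toPTree {k : ℕ} (hk : 2 ≤ k) (x : BranchData k) :
    x.toPTree.toBranchData hk = x := by
  have hS (i) (hi : i < x.1.1.length) := x.isPlanarTree_subtree hi
  have hm : treeMRCA x.toPTree.1 = List.replicate x.2.1 0 :=
    treeMRCA_graft hS x.1.2.2.2 fun i hi => card_pos.1 <| by
      rw [x.card_leavesOf_subtree hi]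
      exact x.1.2.1 _ (List.getElem_mem hi)
  have hsub (i) (hi : i < x.1.1.length) :
      subtreeAt x.toPTree.1 (treeMRCA x.toPTree.1 ++ [i]) = x.subtree i := by
    rw [hm]
    exact subtreeAt_graft hi
  have hdeg : x.toPTree.2.1.numChildren (treeMRCA x.toPTree.1) = x.1.1.length :=
    x.toPTree.2.1.numChildren_eq fun i => hm ▸ replicate_append_singleton_mem_graft_end hS
  refine BranchData.ext ?_ ?_ fun i _ hi' => ?_
  · change x.toPTree.2.1.branchComposition = x.1.1
    refine List.ext_getElem (by rw [IsPlanarTree.length_branchComposition, hdeg])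
      fun i hi hi' => ?_
    simp only [IsPlanarTree.branchComposition, List.getElem_ofFn]
    rw [hsub i hi', x.card_leavesOf_subtree hi']
  · change (treeMRCA x.toPTree.1).length = x.2.1
    rw [hm, List.length_replicate]
  · change subtreeAt x.toPTree.1 (treeMRCA x.toPTree.1 ++ [i]) = _
    rw [hsub i hi', BranchData.subtree, dif_pos hi']

/-- **Recursive decomposition of a planar tree at its first branch point.**
The map sending a planar tree `τ` with `k ≥ 2` leaves to `(|w|, (S₁(τ), …, S_{|π|}(τ)))`,
where `w` is the MRCA of all leaves, `π = π(τ)` the consecutive-block partition of the leaf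
indices at `w` (encoded by the composition of block sizes), and `Sᵢ(τ)` the subtree attached
to the `i`-th child of `w`, is a bijection onto the disjoint union, over such partitions,
of `ℕ × (T_{|π₁|} × ⋯ × T_{|π_{|π|}|})`. -/
theorem first_branch_point_bijection (k : ℕ) (hk : 2 ≤ k) :
    ∃ e : PTree k ≃ Σ c : ConsecComposition k, ℕ × (∀ i : Fin c.1.length, PTree (c.1.get i)),
      ∀ τ : PTree k,
        (e τ).2.1 = (treeMRCA τ.1).length ∧
        ∀ i : Fin (e τ).1.1.length,
          ((e τ).2.2 i).1 = subtreeAt τ.1 (treeMRCA τ.1 ++ [i.1]) :=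
  ⟨⟨PTree.toBranchData hk, BranchData.toPTree, PTree.toPTree_toBranchData hk,
    BranchData.toBranchData_toPTree hk⟩, fun _ => ⟨rfl, fun _ => rfl⟩⟩

end
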